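/- Let n ≥ 1, let N = p_1·p_2···p_n be the product of the first n primes, and let K be a natural number. The number of integers x with 1 ≤ x ≤ K·N such that both x − 1 and x + 1 are coprime to N equals K·∏_{i=2}^{n} (p_i − 2); that is, each of the K consecutive cycles of length N contains exactly ∏_{i=2}^{n}(p_i − 2) twin n-prime pairs. -/

import Mathlib

/-!
Whether `x - 1` and `x + 1` are both coprime to `N` depends only on `x` modulo `N`, so each of
the `K` blocks of `N` consecutive integers contributes the number of "twin centers" of `ZMod N`,
the residues `z` with `z - 1` and `z + 1` both units. By the Chinese remainder theorem this count
is the product of the counts modulo the primes `p ∣ N`. In `ZMod p` only `z = ±1` are excluded,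
leaving `p - 2` centers for odd `p`, and the single center `0` for `p = 2`.
-/

open Finset Function

def twinCenters (R : Type*) [Ring R] : Set R := {z | IsUnit (z - 1) ∧ IsUnit (z + 1)}

theorem Nat.count_mul_of_periodic {p : ℕ → Prop} [DecidablePred p] {a : ℕ} (hp : Periodic p a)
    (K : ℕ) : Nat.count p (K * a) = K * Nat.count p a := by
  induction K with
  | zero => simp
  | succ K ih =>
    have hshift : ∀ k, p (K * a + k) ↔ p k := fun k ↦ by
      rw [add_comm]
      exact iff_of_eq (hp.nat_mul K k)
    rw [succ_mul, Nat.count_add, ih]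
    simp only [hshift]
    ring

theorem ZMod.count_natCast (N : ℕ) [NeZero N] (Q : ZMod N → Prop) [DecidablePred Q] :
    Nat.count (fun x : ℕ ↦ Q x) N = Nat.card {z // Q z} := by
  rw [Nat.count_eq_card_filter_range, Nat.card_eq_fintype_card, Fintype.card_subtype]
  refine card_nbij' (fun x ↦ (x : ZMod N)) ZMod.val ?_ ?_ ?_ ?_
  · exact fun x hx ↦ by simpa using (mem_filter.mp hx).2
  · intro z hz
    exact mem_filter.mpr ⟨mem_range.mpr (ZMod.val_lt z), by simpa using (mem_filter.mp hz).2⟩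
  · exact fun x hx ↦ ZMod.val_cast_of_lt (mem_range.mp (mem_filter.mp hx).1)
  · exact fun z _ ↦ ZMod.natCast_zmod_val z

theorem ZMod.card_filter_Ico_natCast (N : ℕ) [NeZero N] (Q : ZMod N → Prop) [DecidablePred Q]
    (b K : ℕ) : #{x ∈ Ico b (b + K * N) | Q (x : ℕ)} = K * Nat.card {z // Q z} := by
  have hper : Periodic (fun x : ℕ ↦ Q x) N := fun x ↦ by simp
  rw [Nat.filter_Ico_card_eq_of_periodic _ _ _ (by exact_mod_cast hper.nat_mul K),
    Nat.count_mul_of_periodic hper, ZMod.count_natCast]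

theorem RingEquiv.card_twinCenters {R S : Type*} [Ring R] [Ring S] (e : R ≃+* S) :
    Nat.card (twinCenters R) = Nat.card (twinCenters S) :=
  Nat.card_congr <| e.toEquiv.subtypeEquiv fun z ↦ by
    change IsUnit (z - 1) ∧ IsUnit (z + 1) ↔ IsUnit (e z - 1) ∧ IsUnit (e z + 1)
    rw [← isUnit_map_iff e (z - 1), ← isUnit_map_iff e (z + 1),
      map_sub, map_add, map_one]

theorem Pi.card_twinCenters {ι : Type*} [Fintype ι] (R : ι → Type*) [∀ i, Ring (R i)] :
    Nat.card (twinCenters (Π i, R i)) = ∏ i, Nat.card (twinCenters (R i)) := by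
  have h : twinCenters (Π i, R i) = Set.univ.pi fun i ↦ twinCenters (R i) := by
    ext f
    simp [twinCenters, Pi.isUnit_iff, forall_and]
  rw [h, Nat.card_congr (Equiv.Set.univPi _), Nat.card_pi]

theorem card_twinCenters_of_ringChar_ne_two (F : Type*) [Field F] [Finite F]
    (hF : ringChar F ≠ 2) :
    Nat.card (twinCenters F) = Nat.card F - 2 := by
  have h : twinCenters F = {1, -1}ᶜ := by
    ext z
    simp [twinCenters, sub_eq_zero, add_eq_zero_iff_eq_neg, not_or]
  rw [h, Nat.card_coe_set_eq, Set.ncard_compl,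
    Set.ncard_pair (Ring.neg_one_ne_one_of_char_ne_two hF).symm]

theorem ZMod.card_twinCenters_two : Nat.card (twinCenters (ZMod 2)) = 1 := by
  have h : twinCenters (ZMod 2) = {0} := Set.ext fun z ↦ by
    change IsUnit (z - 1) ∧ IsUnit (z + 1) ↔ z = 0
    simp only [isUnit_iff_ne_zero]
    revert z
    decide
  rw [h, Nat.card_unique]

theorem ZMod.card_twinCenters_of_ne_two (p : ℕ) [Fact p.Prime] (hp : p ≠ 2) :
    Nat.card (twinCenters (ZMod p)) = p - 2 := by
  rw [card_twinCenters_of_ringChar_ne_two _ (by rwa [ZMod.ringChar_zmod_n]), Nat.card_zmod]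

theorem ZMod.natCast_mem_twinCenters_iff {N x : ℕ} (hx : 1 ≤ x) :
    (x : ZMod N) ∈ twinCenters (ZMod N) ↔ (x - 1).Coprime N ∧ (x + 1).Coprime N := by
  rw [← ZMod.isUnit_iff_coprime, ← ZMod.isUnit_iff_coprime, Nat.cast_sub hx, Nat.cast_add,
    Nat.cast_one]
  rfl

theorem pairwise_coprime_nth_prime :
    Pairwise (Nat.Coprime on fun i ↦ Nat.nth Nat.Prime i) := fun i j hij ↦
  (Nat.coprime_primes (Nat.prime_nth_prime i) (Nat.prime_nth_prime j)).mpr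
    fun h ↦ hij (Nat.nth_injective Nat.infinite_setOfPred_prime h)

theorem prod_card_twinCenters_zmod_nth_prime (n : ℕ) :
    ∏ i ∈ range n, Nat.card (twinCenters (ZMod (Nat.nth Nat.Prime i))) =
      ∏ i ∈ Ico 1 n, (Nat.nth Nat.Prime i - 2) := by
  cases n with
  | zero => simp
  | succ n =>
    rw [prod_range_succ', prod_Ico_eq_prod_range, Nat.nth_prime_zero_eq_two,
      ZMod.card_twinCenters_two, mul_one, Nat.add_sub_cancel]
    refine prod_congr rfl fun i _ ↦ ?_
    have : Fact (Nat.nth Nat.Prime (i + 1)).Prime := ⟨Nat.prime_nth_prime _⟩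
    have hodd : Nat.nth Nat.Prime (i + 1) ≠ 2 := by
      rw [← Nat.nth_prime_zero_eq_two]
      exact (Nat.nth_strictMono Nat.infinite_setOfPred_prime i.succ_pos).ne'
    rw [add_comm 1 i, ZMod.card_twinCenters_of_ne_two _ hodd]

theorem count_twin_nPrimes_cycles_general (n : ℕ)
    (N : ℕ) (hN : N = ∏ i ∈ Finset.range n, Nat.nth Nat.Prime i) (K : ℕ) :
    ((Finset.Icc 1 (K * N)).filter
        (fun x => Nat.Coprime (x - 1) N ∧ Nat.Coprime (x + 1) N)).card =
      K * ∏ i ∈ Finset.Ico 1 n, (Nat.nth Nat.Prime i - 2) := by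
  classical
  have hNfin : N = ∏ i : Fin n, Nat.nth Nat.Prime i := by rw [hN, Fin.prod_univ_eq_prod_range]
  have : NeZero N := ⟨hN ▸ prod_ne_zero_iff.mpr fun i _ ↦ (Nat.prime_nth_prime i).ne_zero⟩
  calc #{x ∈ Icc 1 (K * N) | (x - 1).Coprime N ∧ (x + 1).Coprime N}
      = #{x ∈ Ico 1 (1 + K * N) | ((x : ℕ) : ZMod N) ∈ twinCenters (ZMod N)} := by
        rw [add_comm, Ico_add_one_right_eq_Icc]
        refine congrArg card (filter_congr fun x hx ↦ ?_)
        exact (ZMod.natCast_mem_twinCenters_iff (mem_Icc.mp hx).1).symm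
    _ = K * Nat.card (twinCenters (ZMod N)) :=
        ZMod.card_filter_Ico_natCast N (· ∈ twinCenters (ZMod N)) 1 K
    _ = K * ∏ i ∈ Ico 1 n, (Nat.nth Nat.Prime i - 2) := by
        have hcoprime : Pairwise (Nat.Coprime on fun i : Fin n ↦ Nat.nth Nat.Prime i) :=
          fun i j hij ↦ pairwise_coprime_nth_prime (Fin.val_injective.ne hij)
        subst hNfin
        rw [(ZMod.prodEquivPi _ hcoprime).card_twinCenters, Pi.card_twinCenters,
          Fin.prod_univ_eq_prod_range
            (fun i ↦ Nat.card (twinCenters (ZMod (Nat.nth Nat.Prime i)))),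
          prod_card_twinCenters_zmod_nth_prime]

/-- Paper's Corollary 2a: with `N` the product of the first `n` primes and `K`
a natural number, the number of integers `1 ≤ x ≤ K·N` with both `x - 1` and
`x + 1` coprime to `N` equals `K·∏_{i=2}^{n} (p_i - 2)`: each of the `K`
consecutive cycles of length `N` contains exactly `∏_{i=2}^{n} (p_i - 2)` twin
`n`-prime pairs. -/
theorem count_twin_nPrimes_cycles (n : ℕ) (hn : 1 ≤ n)
    (N : ℕ) (hN : N = ∏ i ∈ Finset.range n, Nat.nth Nat.Prime i) (K : ℕ) :
    ((Finset.Icc 1 (K * N)).filter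
        (fun x => Nat.Coprime (x - 1) N ∧ Nat.Coprime (x + 1) N)).card =
      K * ∏ i ∈ Finset.Ico 1 n, (Nat.nth Nat.Prime i - 2) :=
  count_twin_nPrimes_cycles_general n N hN K
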